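/- Let P be a rooted finite poset with at least two elements, Q a finite poset, and K a field. If the ideal J_{P,Q} is generated by quadratic binomials, then every proper poset cycle in Q of length ≥ 6 admits a chord. -/

import Mathlib

open MvPolynomial

/-- The `K`-algebra map sending the variable `t_φ` (indexed by an isotone map
`φ : P →o Q`) to the monomial `∏_{p ∈ P} x_{p, φ(p)}`. -/
noncomputable def isotonianMap (K P Q : Type) [Field K] [PartialOrder P] [Fintype P]
    [PartialOrder Q] [Fintype Q] :
    MvPolynomial (P →o Q) K →ₐ[K] MvPolynomial (P × Q) K :=
  aeval fun φ : P →o Q => ∏ p : P, X (p, φ p)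

/-- The defining ideal `J_{P,Q}` of the isotonian algebra `K[P,Q]`. -/
noncomputable def isotonianIdeal (K P Q : Type) [Field K] [PartialOrder P] [Fintype P]
    [PartialOrder Q] [Fintype Q] :
    Ideal (MvPolynomial (P →o Q) K) :=
  RingHom.ker (isotonianMap K P Q)

/-- A binomial `monomial u 1 - monomial v 1` which is quadratic: both monomials have degree 2. -/
def IsQuadraticBinomial {σ K : Type} [Field K] (f : MvPolynomial σ K) : Prop :=
  ∃ u v : σ →₀ ℕ, (u.sum fun _ e => e) = 2 ∧ (v.sum fun _ e => e) = 2 ∧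
    f = monomial u 1 - monomial v 1

/-- `q 0, q 1, …, q (2*m-1)` is a poset cycle of length `2*m` in `Q` (0-based version of
`q₁ ≤ q₂ ≥ q₃ ≤ ⋯ ≤ q_{2m} ≥ q₁`): every even-indexed element is below both of its cyclic
neighbors. -/
def IsPosetCycle {Q : Type} [PartialOrder Q] (m : ℕ) (q : ℕ → Q) : Prop :=
  ∀ i < m, q (2 * i) ≤ q (2 * i + 1) ∧ q (2 * i) ≤ q ((2 * i + 2 * m - 1) % (2 * m))

/-- The poset cycle `q 0, …, q (2*m-1)` has a chord: some even-indexed (0-based) element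
is below an odd-indexed element which is not one of its two cyclic neighbors. -/
def HasChord {Q : Type} [PartialOrder Q] (m : ℕ) (q : ℕ → Q) : Prop :=
  ∃ i < m, ∃ j < m, j ≠ i ∧ 2 * j + 1 ≠ (2 * i + 2 * m - 1) % (2 * m) ∧
    q (2 * i) ≤ q (2 * j + 1)

/-- The poset cycle `q 0, …, q (2*m-1)` is proper: its elements are pairwise distinct, the
even-indexed (0-based) elements are pairwise incomparable, and so are the odd-indexed ones. -/
def IsProperPosetCycle {Q : Type} [PartialOrder Q] (m : ℕ) (q : ℕ → Q) : Prop :=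
  (∀ i < 2 * m, ∀ j < 2 * m, i ≠ j → q i ≠ q j) ∧
  (∀ i < m, ∀ j < m, i ≠ j → ¬ q (2 * i) ≤ q (2 * j)) ∧
  (∀ i < m, ∀ j < m, i ≠ j → ¬ q (2 * i + 1) ≤ q (2 * j + 1))

/-!
Let `p₀` be the least element of `P`, write `eᵢ = q (2i)` and `oᵢ = q (2i+1)` for `i : Fin m`,
and for `a ≤ b` let `[a, b]` be the isotone map sending `p₀` to `a` and every other point to `b`.
The monomials `∏ᵢ t_[eᵢ, oᵢ]` and `∏ᵢ t_[eᵢ, oᵢ₋₁]` have the same image under `Φ`, and they differ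
because `P` has a point other than `p₀`. If no `i ≠ j` has both `eᵢ ≤ oⱼ` and `eⱼ ≤ oᵢ`, every
quadratic binomial of `J_{P,Q}` with a monomial dividing the first product is trivial:
two maps `[eᵢ, oᵢ]`, `[eⱼ, oⱼ]` can exchange their values above `p₀` only when both inequalities
hold. So the coefficient of the first product vanishes on the ideal spanned by the quadratic
binomials, which therefore misses the difference of the two products. In a chordless cycle,
`eᵢ ≤ oⱼ` forces `j ∈ {i, i - 1}`; a pair `i ≠ j` as above gives `j = i - 1` and `i = j - 1`,
which is impossible once `m ≥ 3`.
-/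

theorem MvPolynomial.coeff_eq_zero_of_mem_span_binomials {R σ : Type*} [CommRing R]
    {G : Set (MvPolynomial σ R)} {d : σ →₀ ℕ}
    (hG : ∀ g ∈ G, ∃ u v : σ →₀ ℕ,
      g = monomial u 1 - monomial v 1 ∧ ∀ c, c + u = d ↔ c + v = d)
    {f : MvPolynomial σ R} (hf : f ∈ Ideal.span G) : coeff d f = 0 := by
  suffices h : ∀ h : MvPolynomial σ R, coeff d (h * f) = 0 by simpa using h 1
  induction hf using Submodule.span_induction with
  | mem g hg =>
    obtain ⟨u, v, rfl, huv⟩ := hG g hg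
    intro h
    induction h using MvPolynomial.induction_on' with
    | monomial c r =>
      classical
      rw [mul_sub, monomial_mul, monomial_mul, coeff_sub, coeff_monomial, coeff_monomial]
      simp [huv c]
    | add p q hp hq => rw [add_mul, coeff_add, hp, hq, add_zero]
  | zero => simp
  | add x y _ _ hx hy => intro h; rw [mul_add, coeff_add, hx, hy, add_zero]
  | smul a x _ hx => intro h; rw [smul_eq_mul, ← mul_assoc, hx]

theorem Finsupp.exists_eq_single_add_single_of_sum_eq_two {α : Type*} {u : α →₀ ℕ}
    (hu : (u.sum fun _ e => e) = 2) : ∃ a b, u = single a 1 + single b 1 := by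
  obtain ⟨a, b, hab⟩ := Multiset.card_eq_two.1 ((Finsupp.card_toMultiset u).trans hu)
  classical
  refine ⟨a, b, ?_⟩
  rw [← Finsupp.toMultiset_toFinsupp u, hab, Multiset.insert_eq_cons, ← Multiset.singleton_add,
    map_add, Multiset.toFinsupp_singleton, Multiset.toFinsupp_singleton]

theorem Finsupp.mem_of_single_le_sum_single {α : Type*} {S : Finset α} {a : α} {k : ℕ}
    (hk : k ≠ 0) (h : single a k ≤ ∑ b ∈ S, single b k) : a ∈ S := by
  classical
  by_contra ha
  have := h a
  simp [Finsupp.finsetSum_apply, single_apply, ha] at this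
  exact hk this

namespace OrderHom

variable {P Q : Type*} [PartialOrder P] [Preorder Q] [DecidableEq P]

def updateBot {p₀ : P} (hp₀ : IsBot p₀) {a b : Q} (hab : a ≤ b) : P →o Q where
  toFun := Function.update (fun _ => b) p₀ a
  monotone' p p' hpp' := by
    by_cases hp : p = p₀
    · subst hp
      by_cases hp' : p' = p
      · simp [hp']
      · simpa [hp'] using hab
    · have hp' : p' ≠ p₀ := fun h => hp (le_antisymm (h ▸ hpp') (hp₀ p))
      simp [hp, hp']

theorem updateBot_apply_bot {p₀ : P} (hp₀ : IsBot p₀) {a b : Q} (hab : a ≤ b) :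
    updateBot hp₀ hab p₀ = a :=
  Function.update_self (f := fun _ => b) _ _

theorem updateBot_apply_of_ne {p₀ : P} (hp₀ : IsBot p₀) {a b : Q} (hab : a ≤ b) {p : P}
    (hp : p ≠ p₀) : updateBot hp₀ hab p = b :=
  Function.update_of_ne (f := fun _ => b) hp _

end OrderHom

theorem OrderHom.eq_and_eq_of_pointwise_pair {P Q : Type*} [Preorder P] [PartialOrder Q]
    {p₀ : P} (hp₀ : IsBot p₀) {φ ψ γ δ : P →o Q}
    (hpair : ∀ p, γ p = φ p ∧ δ p = ψ p ∨ γ p = ψ p ∧ δ p = φ p)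
    (hrigid : ∀ p, φ p₀ ≤ ψ p → ψ p₀ ≤ φ p → φ p = ψ p)
    (hγ : γ p₀ = φ p₀) (hδ : δ p₀ = ψ p₀) : γ = φ ∧ δ = ψ := by
  suffices h : ∀ p, γ p = φ p ∧ δ p = ψ p from
    ⟨OrderHom.ext _ _ (funext fun p => (h p).1), OrderHom.ext _ _ (funext fun p => (h p).2)⟩
  intro p
  rcases hpair p with h | ⟨hγp, hδp⟩
  · exact h
  · have hφψ : φ p = ψ p := hrigid p
      (hγ ▸ hγp ▸ γ.monotone (hp₀ p)) (hδ ▸ hδp ▸ δ.monotone (hp₀ p))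
    exact ⟨hγp.trans hφψ.symm, hδp.trans hφψ⟩

section Isotonian

variable {P Q : Type} [PartialOrder P] [Fintype P] [PartialOrder Q]

noncomputable def graphExponent (φ : P →o Q) : P × Q →₀ ℕ := ∑ p, Finsupp.single (p, φ p) 1

theorem graphExponent_apply (φ : P →o Q) (p : P) (x : Q) :
    graphExponent φ (p, x) = Finsupp.single (φ p) 1 x := by
  classical
  rw [graphExponent, Finsupp.finsetSum_apply, Finset.sum_eq_single p (fun p' _ hp' => by
    simp [Prod.ext_iff, hp']) (by simp)]
  simp [Finsupp.single_apply]

theorem apply_eq_or_swap_of_graphExponent_add_eq {φ ψ γ δ : P →o Q}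
    (h : graphExponent φ + graphExponent ψ = graphExponent γ + graphExponent δ) (p : P) :
    γ p = φ p ∧ δ p = ψ p ∨ γ p = ψ p ∧ δ p = φ p := by
  classical
  have hp : Finsupp.single (φ p) 1 + Finsupp.single (ψ p) 1 =
      Finsupp.single (γ p) (1 : ℕ) + Finsupp.single (δ p) 1 := by
    ext x
    simpa [graphExponent_apply] using DFunLike.congr_fun h (p, x)
  rw [Finsupp.single_add_single_eq_single_add_single one_ne_zero one_ne_zero] at hp
  grind

theorem sum_graphExponent_updateBot_comp_equiv [DecidableEq P] {p₀ : P} (hp₀ : IsBot p₀)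
    {ι : Type*} [Fintype ι] (σ : ι ≃ ι) {a b : ι → Q} (hab : ∀ i, a i ≤ b i)
    (hab' : ∀ i, a i ≤ b (σ i)) :
    ∑ i, graphExponent (OrderHom.updateBot hp₀ (hab i)) =
      ∑ i, graphExponent (OrderHom.updateBot hp₀ (hab' i)) := by
  ext ⟨p, x⟩
  simp only [Finsupp.finsetSum_apply, graphExponent_apply]
  by_cases hp : p = p₀
  · simp [hp, OrderHom.updateBot_apply_bot]
  · simp only [OrderHom.updateBot_apply_of_ne hp₀ _ hp]
    exact (σ.sum_comp fun i => Finsupp.single (b i) 1 x).symm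

noncomputable def isotonianExponent : ((P →o Q) →₀ ℕ) →ₗ[ℕ] (P × Q →₀ ℕ) :=
  Finsupp.linearCombination ℕ graphExponent

theorem isotonianExponent_sum_single (S : Finset (P →o Q)) :
    isotonianExponent (∑ φ ∈ S, Finsupp.single φ 1) = ∑ φ ∈ S, graphExponent φ := by
  simp [isotonianExponent, map_sum]

theorem eq_of_isotonianExponent_eq_of_le_sum_single {p₀ : P} (hp₀ : IsBot p₀)
    {S : Finset (P →o Q)}
    (hS : ∀ φ ∈ S, ∀ ψ ∈ S, ∀ p, φ p₀ ≤ ψ p → ψ p₀ ≤ φ p → φ p = ψ p)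
    {u v : (P →o Q) →₀ ℕ} (hu : (u.sum fun _ e => e) = 2) (hv : (v.sum fun _ e => e) = 2)
    (huv : isotonianExponent u = isotonianExponent v)
    (huS : u ≤ ∑ φ ∈ S, Finsupp.single φ 1) : v = u := by
  obtain ⟨φ, ψ, rfl⟩ := Finsupp.exists_eq_single_add_single_of_sum_eq_two hu
  obtain ⟨γ, δ, rfl⟩ := Finsupp.exists_eq_single_add_single_of_sum_eq_two hv
  have hφ : φ ∈ S := Finsupp.mem_of_single_le_sum_single one_ne_zero (le_trans le_self_add huS)
  have hψ : ψ ∈ S := Finsupp.mem_of_single_le_sum_single one_ne_zero (le_trans le_add_self huS)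
  simp only [map_add, isotonianExponent, Finsupp.linearCombination_single, one_smul] at huv
  have hpair := apply_eq_or_swap_of_graphExponent_add_eq huv
  rcases hpair p₀ with ⟨hγ, hδ⟩ | ⟨hγ, hδ⟩
  · obtain ⟨rfl, rfl⟩ :=
      OrderHom.eq_and_eq_of_pointwise_pair hp₀ hpair (hS φ hφ ψ hψ) hγ hδ
    rfl
  · obtain ⟨rfl, rfl⟩ := OrderHom.eq_and_eq_of_pointwise_pair hp₀ (fun p => (hpair p).symm)
      (hS ψ hψ φ hφ) hγ hδ
    exact add_comm _ _

variable (K : Type) [Field K] [Fintype Q]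

theorem isotonianMap_monomial (v : (P →o Q) →₀ ℕ) :
    isotonianMap K P Q (monomial v 1) = monomial (isotonianExponent v) 1 := by
  have hX : ∀ φ : P →o Q, ∏ p : P, (X (p, φ p) : MvPolynomial (P × Q) K) =
      monomial (graphExponent φ) 1 := fun φ => (monomial_sum_one _ _).symm
  rw [isotonianMap, aeval_monomial, map_one, one_mul, isotonianExponent,
    Finsupp.linearCombination_apply, monomial_finsupp_sum_index, C_1, one_mul]
  exact Finsupp.prod_congr fun φ _ => by rw [hX, monomial_pow, one_pow]

theorem monomial_sub_monomial_mem_isotonianIdeal_iff (u v : (P →o Q) →₀ ℕ) :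
    monomial u 1 - monomial v 1 ∈ isotonianIdeal K P Q ↔
      isotonianExponent u = isotonianExponent v := by
  rw [isotonianIdeal, RingHom.mem_ker, map_sub, sub_eq_zero]
  simp only [isotonianMap_monomial]
  exact (monomial_left_injective one_ne_zero).eq_iff

theorem monomial_sub_monomial_notMem_span_quadratic {p₀ : P} (hp₀ : IsBot p₀) {S : Finset (P →o Q)}
    (hS : ∀ φ ∈ S, ∀ ψ ∈ S, ∀ p, φ p₀ ≤ ψ p → ψ p₀ ≤ φ p → φ p = ψ p)
    {d : (P →o Q) →₀ ℕ} (hd : d ≠ ∑ φ ∈ S, Finsupp.single φ 1) :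
    monomial (∑ φ ∈ S, Finsupp.single φ 1) 1 - monomial d 1 ∉
      Ideal.span {f | f ∈ isotonianIdeal K P Q ∧ IsQuadraticBinomial f} := by
  classical
  intro hmem
  set M := ∑ φ ∈ S, Finsupp.single φ 1
  have hcoeff : coeff M (monomial M 1 - monomial d 1 : MvPolynomial (P →o Q) K) = 0 :=
    coeff_eq_zero_of_mem_span_binomials ?_ hmem
  · simp [coeff_monomial, hd] at hcoeff
  rintro g ⟨hgJ, u, v, hu, hv, rfl⟩
  have huv := (monomial_sub_monomial_mem_isotonianIdeal_iff K u v).1 hgJ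
  refine ⟨u, v, rfl, fun c => ⟨fun h => ?_, fun h => ?_⟩⟩
  · rwa [eq_of_isotonianExponent_eq_of_le_sum_single hp₀ hS hu hv huv
      (le_add_self.trans_eq h)]
  · rwa [eq_of_isotonianExponent_eq_of_le_sum_single hp₀ hS hv hu huv.symm
      (le_add_self.trans_eq h)]

theorem exists_crossing_of_isotonianIdeal_eq_span [Nontrivial P]
    (hJ : isotonianIdeal K P Q =
      Ideal.span {f | f ∈ isotonianIdeal K P Q ∧ IsQuadraticBinomial f})
    {p₀ : P} (hp₀ : IsBot p₀) {n : ℕ} (hn : n ≠ 0) {e o : Fin (n + 1) → Q}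
    (he : Function.Injective e) (ho : Function.Injective o)
    (hself : ∀ i, e i ≤ o i) (hprev : ∀ i, e i ≤ o (i - 1)) :
    ∃ i j, i ≠ j ∧ e i ≤ o j ∧ e j ≤ o i := by
  classical
  by_contra! hcross
  set α := fun i => OrderHom.updateBot hp₀ (hself i)
  set β := fun i => OrderHom.updateBot hp₀ (hprev i)
  have hα : ∀ i, α i p₀ = e i := fun i => OrderHom.updateBot_apply_bot hp₀ _
  have hβ : ∀ i, β i p₀ = e i := fun i => OrderHom.updateBot_apply_bot hp₀ _
  have hαinj : Function.Injective α := fun i j h => he (by simpa [hα] using congr($h p₀))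
  have hβinj : Function.Injective β := fun i j h => he (by simpa [hβ] using congr($h p₀))
  have hrigid : ∀ φ ∈ Finset.univ.image α, ∀ ψ ∈ Finset.univ.image α, ∀ p,
      φ p₀ ≤ ψ p → ψ p₀ ≤ φ p → φ p = ψ p := by
    simp only [Finset.mem_image, Finset.mem_univ, true_and]
    rintro _ ⟨i, rfl⟩ _ ⟨j, rfl⟩ p hij hji
    by_cases hp : p = p₀
    · subst hp
      exact le_antisymm hij hji
    · obtain rfl : i = j := by
        by_contra hne
        simp only [α, hα, OrderHom.updateBot_apply_of_ne hp₀ _ hp] at hij hji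
        exact hcross i j hne hij hji
      rfl
  have hne : ∑ φ ∈ Finset.univ.image β, Finsupp.single φ 1 ≠
      ∑ φ ∈ Finset.univ.image α, Finsupp.single φ 1 := by
    intro h
    have himage : Finset.univ.image β = Finset.univ.image α := by
      have := congr(Finsupp.toMultiset $h)
      rwa [Finsupp.toMultiset_sum_single, Finsupp.toMultiset_sum_single, one_smul, one_smul,
        Finset.val_inj] at this
    obtain ⟨i, -, hi⟩ :=
      Finset.mem_image.1 (himage ▸ Finset.mem_image_of_mem β (Finset.mem_univ 0))
    obtain rfl : i = 0 := he (by simpa [hα, hβ] using congr($hi p₀))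
    obtain ⟨p₁, hp₁⟩ := exists_ne p₀
    have h01 : (0 : Fin (n + 1)) = 0 - 1 := ho (by
      simpa [α, β, OrderHom.updateBot_apply_of_ne hp₀ _ hp₁] using congr($hi p₁))
    exact hn (by simpa using h01)
  refine monomial_sub_monomial_notMem_span_quadratic K hp₀ hrigid hne ?_
  rw [← hJ, monomial_sub_monomial_mem_isotonianIdeal_iff, isotonianExponent_sum_single,
    isotonianExponent_sum_single, Finset.sum_image hαinj.injOn, Finset.sum_image hβinj.injOn]
  exact sum_graphExponent_updateBot_comp_equiv hp₀ (Equiv.subRight 1) hself hprev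

end Isotonian

section CycleIndexing

variable {Q : Type} [PartialOrder Q] {n : ℕ} {q : ℕ → Q}

theorem two_mul_add_two_mul_sub_one_mod (i : Fin (n + 1)) :
    (2 * i + 2 * (n + 1) - 1) % (2 * (n + 1)) = 2 * ((i - 1 : Fin (n + 1)) : ℕ) + 1 := by
  rw [Fin.coe_sub_one]
  split_ifs with hi
  · subst hi
    rw [Fin.val_zero, Nat.mod_eq_of_lt (by omega)]
    omega
  · have hi' : (i : ℕ) ≠ 0 := Fin.val_ne_zero_iff.2 hi
    rw [show 2 * i + 2 * (n + 1) - 1 = 2 * i - 1 + 2 * (n + 1) by omega, Nat.add_mod_right,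
      Nat.mod_eq_of_lt (by omega)]
    omega

theorem IsPosetCycle.le_odd (h : IsPosetCycle (n + 1) q) (i : Fin (n + 1)) :
    q (2 * i) ≤ q (2 * i + 1) :=
  (h i i.isLt).1

theorem IsPosetCycle.le_odd_sub_one (h : IsPosetCycle (n + 1) q) (i : Fin (n + 1)) :
    q (2 * i) ≤ q (2 * ((i - 1 : Fin (n + 1)) : ℕ) + 1) :=
  two_mul_add_two_mul_sub_one_mod i ▸ (h i i.isLt).2

theorem IsProperPosetCycle.injective_even (h : IsProperPosetCycle (n + 1) q) :
    Function.Injective fun i : Fin (n + 1) => q (2 * i) := fun i j hij =>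
  Fin.ext (by_contra fun hne => h.1 (2 * i) (by omega) (2 * j) (by omega) (by omega) hij)

theorem IsProperPosetCycle.injective_odd (h : IsProperPosetCycle (n + 1) q) :
    Function.Injective fun i : Fin (n + 1) => q (2 * i + 1) := fun i j hij =>
  Fin.ext (by_contra fun hne => h.1 (2 * i + 1) (by omega) (2 * j + 1) (by omega) (by omega) hij)

theorem hasChord_of_le {i j : Fin (n + 1)} (hji : j ≠ i) (hj : j ≠ i - 1)
    (hle : q (2 * i) ≤ q (2 * j + 1)) : HasChord (n + 1) q := by
  refine ⟨i, i.isLt, j, j.isLt, Fin.val_ne_of_ne hji, ?_, hle⟩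
  rw [two_mul_add_two_mul_sub_one_mod]
  exact fun h => hj (Fin.ext (by omega))

theorem Fin.ne_sub_one_or_ne_sub_one (hn : 2 ≤ n) (i j : Fin (n + 1)) :
    j ≠ i - 1 ∨ i ≠ j - 1 := by
  by_contra! ⟨hj, hi⟩
  have h2 : (1 + 1 : Fin (n + 1)) = 0 := by
    rw [hj, sub_sub] at hi
    exact sub_eq_self.1 hi.symm
  have h2' : 2 % (n + 1) = 0 := by simpa [Fin.val_add] using congr(Fin.val $h2)
  rw [Nat.mod_eq_of_lt (by omega)] at h2'
  omega

end CycleIndexing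

theorem statement15_general (K P Q : Type) [Field K] [PartialOrder P] [Fintype P]
    [PartialOrder Q] [Fintype Q]
    (hmin : ∃ p₀ : P, ∀ x : P, p₀ ≤ x)
    (hP : ∃ a b : P, a ≠ b)
    (hJ : isotonianIdeal K P Q =
      Ideal.span {f | f ∈ isotonianIdeal K P Q ∧ IsQuadraticBinomial f}) :
    ∀ m : ℕ, 3 ≤ m → ∀ q : ℕ → Q, IsPosetCycle m q → IsProperPosetCycle m q →
      HasChord m q := by
  intro m hm q hcycle hproper
  obtain ⟨n, rfl⟩ : ∃ n, m = n + 1 := ⟨m - 1, by omega⟩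
  obtain ⟨p₀, hp₀⟩ := hmin
  obtain ⟨a, b, hab⟩ := hP
  have : Nontrivial P := nontrivial_of_ne a b hab
  obtain ⟨i, j, hij, hle, hle'⟩ := exists_crossing_of_isotonianIdeal_eq_span K hJ hp₀
    (by omega) hproper.injective_even hproper.injective_odd hcycle.le_odd hcycle.le_odd_sub_one
  rcases Fin.ne_sub_one_or_ne_sub_one (by omega) i j with h | h
  · exact hasChord_of_le hij.symm h hle
  · exact hasChord_of_le hij h hle'

/-- If `P` is rooted with at least two elements and `J_{P,Q}` is generated by quadratic
binomials, then every proper poset cycle in `Q` of length `≥ 6` admits a chord. -/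
theorem statement15 (K P Q : Type) [Field K] [PartialOrder P] [Fintype P]
    [PartialOrder Q] [Fintype Q]
    (hmin : ∃ p₀ : P, ∀ x : P, p₀ ≤ x)
    (hroot : ∀ a b c : P, a ≤ c → b ≤ c → a ≤ b ∨ b ≤ a)
    (hP : ∃ a b : P, a ≠ b)
    (hJ : isotonianIdeal K P Q =
      Ideal.span {f | f ∈ isotonianIdeal K P Q ∧ IsQuadraticBinomial f}) :
    ∀ m : ℕ, 3 ≤ m → ∀ q : ℕ → Q, IsPosetCycle m q → IsProperPosetCycle m q →
      HasChord m q :=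
  statement15_general K P Q hmin hP hJ
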